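/- Let G be a finite group acting multiplicatively on a finite type S, let F ≤ H be subgroups of G with H normal in G, let n ≥ 1, and let A : (Fin n → G) → PMF S. For g : Fin n → G write Πg := g 0 * ⋯ * g (n−1). Let T(g) := { g' : Fin n → G | Πg' ∈ F • {Πg} (i.e., Πg' * (Πg)⁻¹ ∈ F) and (g i)⁻¹ * g' i ∈ H for all i }, a nonempty finite set. Define D(g) : PMF S by: draw g' uniformly from T(g), then draw s from A g', and output (Πg')⁻¹ • s. Define B(g) : PMF S by: draw f uniformly from F and h : Fin (n−1) → H uniformly, set g' 0 := f * g 0 * h 0, g' i := (h (i−1))⁻¹ * g i * h i for 0 < i < n−1, g' (n−1) := (h (n−2))⁻¹ * g (n−1), then draw s from A g' and output f⁻¹ • s. Then B(g) = PMF.map (fun s => (Πg) • s) (D(g)). -/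
import Mathlib


open scoped Classical ENNReal
set_option linter.unusedSectionVars false
set_option linter.unreachableTactic false
set_option linter.unusedTactic false
set_option linter.unnecessarySimpa false

namespace Stmt5

variable {G : Type*} [Group G] [Fintype G] {S : Type*} [Fintype S] [MulAction G S]

/-- The ordered product `g 0 * g 1 * ⋯ * g (n−1)`. -/
def listProd {n : ℕ} (g : Fin n → G) : G := (List.ofFn g).prod

/-- The set `T(g)` of tuples `g'` with `Πg' * (Πg)⁻¹ ∈ F` and `(g i)⁻¹ * g' i ∈ H`
for all `i`. -/
noncomputable def Tset (F H : Subgroup G) {n : ℕ} (g : Fin n → G) : Finset (Fin n → G) :=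
  Finset.univ.filter fun g' =>
    listProd g' * (listProd g)⁻¹ ∈ F ∧ ∀ i, (g i)⁻¹ * g' i ∈ H

lemma Tset_nonempty (F H : Subgroup G) {n : ℕ} (g : Fin n → G) : (Tset F H g).Nonempty := by
  refine ⟨g, Finset.mem_filter.mpr ⟨Finset.mem_univ _, ?_, fun i => ?_⟩⟩
  · simpa using F.one_mem
  · simpa using H.one_mem

/-- The distribution `D(g)`: draw `g'` uniformly from `T(g)`, then draw `s` from `A g'`,
and output `(Πg')⁻¹ • s`. -/
noncomputable def Dpmf (F H : Subgroup G) {n : ℕ} (A : (Fin n → G) → PMF S)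
    (g : Fin n → G) : PMF S :=
  (PMF.uniformOfFinset (Tset F H g) (Tset_nonempty F H g)).bind fun g' =>
    (A g').map fun s => (listProd g')⁻¹ • s

/-- The Kilian randomization map sending `h` to
`(g 0 * h 0, (h 0)⁻¹ * g 1 * h 1, …, (h (n−2))⁻¹ * g (n−1))`. -/
def kilian (H : Subgroup G) {n : ℕ} (g : Fin n → G) (h : Fin (n - 1) → H) : Fin n → G :=
  fun i =>
    (if hi : 0 < i.val then
        ((h ⟨i.val - 1, by have := i.isLt; omega⟩ : G))⁻¹ else 1) * g i *
    (if hj : i.val < n - 1 then (h ⟨i.val, hj⟩ : G) else 1)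

/-- The distribution `B(g)`: draw `f` uniformly from `F` and `h : Fin (n−1) → H`
uniformly, form the Kilian-randomized tuple whose first entry is `f * g 0 * h 0`, whose
middle entries are `(h (i−1))⁻¹ * g i * h i` and whose last entry is
`(h (n−2))⁻¹ * g (n−1)`, draw `s` from `A` applied to it, and output `f⁻¹ • s`. -/
noncomputable def Bpmf (F H : Subgroup G) {n : ℕ} (hn : 0 < n)
    (A : (Fin n → G) → PMF S) (g : Fin n → G) : PMF S :=
  letI : Nonempty F := ⟨1⟩
  letI : Nonempty H := ⟨1⟩
  (PMF.uniformOfFintype F).bind fun f =>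
    (PMF.uniformOfFintype (Fin (n - 1) → H)).bind fun h =>
      (A (kilian H (Function.update g ⟨0, hn⟩ ((f : G) * g ⟨0, hn⟩)) h)).map
        fun s => (f : G)⁻¹ • s

section Aux

variable {n : ℕ}

/-- suffix product -/
def suff (g : Fin n → G) (k : ℕ) : G := ((List.ofFn g).drop k).prod

lemma suff_of_ge (g : Fin n → G) {k : ℕ} (hk : n ≤ k) : suff g k = 1 := by
  unfold suff
  rw [List.drop_eq_nil_of_le (by simpa using hk)]; rfl

lemma suff_succ (g : Fin n → G) {k : ℕ} (hk : k < n) :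
    suff g k = g ⟨k, hk⟩ * suff g (k + 1) := by
  unfold suff
  rw [List.drop_eq_getElem_cons (by simpa using hk), List.prod_cons]
  simp

lemma listProd_eq_suff (g : Fin n → G) : listProd g = suff g 0 := rfl

/-- downward induction -/
lemma downRec (P : ℕ → Prop) (base : P n)
    (step : ∀ k, k < n → P (k + 1) → P k) : ∀ k, k ≤ n → P k := by
  intro k hk
  obtain ⟨m, hm⟩ : ∃ m, k + m = n := ⟨n - k, by omega⟩
  clear hk
  induction m generalizing k with
  | zero =>
    obtain rfl : k = n := by omega
    exact base
  | succ m ih => exact step k (by omega) (ih (k + 1) (by omega))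

lemma suff_tele (d : ℕ → G) (a : Fin n → G) :
    ∀ k, k ≤ n → suff (fun i => (d i.val)⁻¹ * a i * d (i.val + 1)) k
      = (d k)⁻¹ * suff a k * d n := by
  refine downRec _ ?_ ?_
  · rw [suff_of_ge _ le_rfl, suff_of_ge _ le_rfl]; group
  · intro k hk ih
    rw [suff_succ _ hk, suff_succ a hk, ih]
    group

lemma suff_update_zero (hn : 0 < n) (g : Fin n → G) (x : G) :
    ∀ k, k ≤ n → 1 ≤ k → suff (Function.update g ⟨0, hn⟩ x) k = suff g k := by
  refine downRec _ ?_ ?_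
  · intro _; rw [suff_of_ge _ le_rfl, suff_of_ge _ le_rfl]
  · intro k hk ih h1
    rw [suff_succ _ hk, suff_succ g hk]
    rw [Function.update_of_ne (by simp [Fin.ext_iff]; omega)]
    rcases Nat.lt_or_ge k n with _ | _
    · rw [ih (by omega)]
    · rw [suff_of_ge _ (by omega), suff_of_ge _ (by omega)]

def dfun (H : Subgroup G) (n : ℕ) (h : Fin (n - 1) → H) (j : ℕ) : G :=
  if hj : 1 ≤ j ∧ j ≤ n - 1 then (h ⟨j - 1, by omega⟩ : G) else 1

lemma dfun_mem (H : Subgroup G) (h : Fin (n - 1) → H) (j : ℕ) : dfun H n h j ∈ H := by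
  unfold dfun; split
  · exact Subtype.mem _
  · exact H.one_mem

lemma dfun_zero (H : Subgroup G) (h : Fin (n - 1) → H) : dfun H n h 0 = 1 := by
  unfold dfun; rw [dif_neg (by omega)]

lemma dfun_n (H : Subgroup G) (hn : 1 ≤ n) (h : Fin (n - 1) → H) : dfun H n h n = 1 := by
  unfold dfun; rw [dif_neg (by omega)]

lemma kilian_eq (H : Subgroup G) (g : Fin n → G) (h : Fin (n - 1) → H) (i : Fin n) :
    kilian H g h i = (dfun H n h i.val)⁻¹ * g i * dfun H n h (i.val + 1) := by
  have hi := i.isLt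
  unfold kilian dfun
  congr 1
  · congr 1
    split_ifs with h1 h2 h2 <;> first | rfl | omega | simp | (exfalso; omega)
  · split_ifs with h1 h2 h2 <;> first | rfl | omega | (exfalso; omega)

lemma kilian_funext (H : Subgroup G) (g : Fin n → G) (h : Fin (n - 1) → H) :
    kilian H g h = fun i => (dfun H n h i.val)⁻¹ * g i * dfun H n h (i.val + 1) :=
  funext (kilian_eq H g h)

lemma suff_kilian (H : Subgroup G) (hn : 1 ≤ n) (g : Fin n → G) (h : Fin (n - 1) → H)
    {k : ℕ} (hk : k ≤ n) :
    suff (kilian H g h) k = (dfun H n h k)⁻¹ * suff g k := by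
  rw [kilian_funext, suff_tele (dfun H n h) g k hk, dfun_n H hn, mul_one]

end Aux

section Bij

variable (F H : Subgroup G) {n : ℕ}

noncomputable def Phi (hn : 1 ≤ n) (g : Fin n → G) (p : F × (Fin (n - 1) → H)) :
    Fin n → G :=
  kilian H (Function.update g ⟨0, hn⟩ ((p.1 : G) * g ⟨0, hn⟩)) p.2

lemma listProd_Phi (hn : 1 ≤ n) (g : Fin n → G) (p : F × (Fin (n - 1) → H)) :
    listProd (Phi F H hn g p) = (p.1 : G) * listProd g := by
  rw [listProd_eq_suff, Phi, suff_kilian H hn _ _ (Nat.zero_le n), dfun_zero, inv_one, one_mul,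
    suff_succ _ hn, Function.update_self, listProd_eq_suff, suff_succ g hn, mul_assoc]
  rcases Nat.lt_or_ge 1 n with h1 | h1
  · rw [suff_update_zero hn g _ 1 (by omega) le_rfl]
  · rw [suff_of_ge _ h1, suff_of_ge _ h1]

lemma Phi_mem (hFH : F ≤ H) [H.Normal] (hn : 1 ≤ n) (g : Fin n → G)
    (p : F × (Fin (n - 1) → H)) : Phi F H hn g p ∈ Tset F H g := by
  rw [Tset, Finset.mem_filter]
  refine ⟨Finset.mem_univ _, ?_, ?_⟩
  · rw [listProd_Phi]
    simpa using p.1.2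
  · intro i
    rw [Phi, kilian_eq]
    rcases Nat.eq_zero_or_pos i.val with h0 | h0
    · have hieq : i = ⟨0, hn⟩ := by simp [Fin.ext_iff, h0]
      subst hieq
      rw [Function.update_self, h0, dfun_zero, inv_one, one_mul]
      have h1 : (g ⟨0, hn⟩)⁻¹ * ((p.1 : G) * g ⟨0, hn⟩ * dfun H n p.2 (0 + 1))
          = ((g ⟨0, hn⟩)⁻¹ * (p.1 : G) * ((g ⟨0, hn⟩)⁻¹)⁻¹) * dfun H n p.2 (0 + 1) := by
        group
      rw [h1]
      exact H.mul_mem (‹H.Normal›.conj_mem _ (hFH p.1.2) _) (dfun_mem H p.2 _)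
    · rw [Function.update_of_ne (by simp [Fin.ext_iff]; omega)]
      have h1 : (g i)⁻¹ * ((dfun H n p.2 i.val)⁻¹ * g i * dfun H n p.2 (i.val + 1))
          = ((g i)⁻¹ * (dfun H n p.2 i.val)⁻¹ * ((g i)⁻¹)⁻¹) * dfun H n p.2 (i.val + 1) := by
        group
      rw [h1]
      exact H.mul_mem (‹H.Normal›.conj_mem _ (H.inv_mem (dfun_mem H p.2 _)) _)
        (dfun_mem H p.2 _)

lemma suff_mul_inv_mem [H.Normal] {g g' : Fin n → G}
    (hgg' : ∀ i, (g i)⁻¹ * g' i ∈ H) :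
    ∀ k, k ≤ n → suff g k * (suff g' k)⁻¹ ∈ H := by
  refine downRec _ ?_ ?_
  · rw [suff_of_ge _ le_rfl, suff_of_ge _ le_rfl]
    simpa using H.one_mem
  · intro k hk ih
    have h1 : suff g k * (suff g' k)⁻¹
        = g ⟨k, hk⟩ * ((suff g (k + 1) * (suff g' (k + 1))⁻¹)
            * ((g ⟨k, hk⟩)⁻¹ * g' ⟨k, hk⟩)⁻¹) * (g ⟨k, hk⟩)⁻¹ := by
      rw [suff_succ g hk, suff_succ g' hk]; group
    rw [h1]
    exact ‹H.Normal›.conj_mem _ (H.mul_mem ih (H.inv_mem (hgg' _))) _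

/-- inverse data -/
noncomputable def Psih (g g' : Fin n → G) (i : Fin (n - 1)) : G :=
  suff g (i.val + 1) * (suff g' (i.val + 1))⁻¹

lemma dfun_psih [H.Normal] {g g' : Fin n → G} (hgg' : ∀ i, (g i)⁻¹ * g' i ∈ H)
    (j : ℕ) (hj : 1 ≤ j) :
    dfun H n (fun i => ⟨Psih g g' i, suff_mul_inv_mem H hgg' _ (by have := i.isLt; omega)⟩) j
      = suff g j * (suff g' j)⁻¹ := by
  unfold dfun
  split_ifs with h1
  · show suff g (j - 1 + 1) * (suff g' (j - 1 + 1))⁻¹ = _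
    have hjj : j - 1 + 1 = j := by omega
    rw [hjj]
  · have hj2 : n ≤ j := by omega
    rw [suff_of_ge _ hj2, suff_of_ge _ hj2]
    simp

end Bij

section Bij2

variable (F H : Subgroup G) {n : ℕ}

lemma dfun_succ (h : Fin (n - 1) → H) (i : Fin (n - 1)) :
    dfun H n h (i.val + 1) = h i := by
  unfold dfun
  rw [dif_pos ⟨by omega, by have := i.isLt; omega⟩]
  congr 1

lemma dfun_psih' [H.Normal] {g g' : Fin n → G} (hh : Fin (n - 1) → H)
    (hval : ∀ i, (hh i : G) = Psih g g' i) (j : ℕ) (hj : 1 ≤ j) :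
    dfun H n hh j = suff g j * (suff g' j)⁻¹ := by
  unfold dfun
  split_ifs with h1
  · rw [hval]
    show suff g (j - 1 + 1) * (suff g' (j - 1 + 1))⁻¹ = _
    have hjj : j - 1 + 1 = j := by omega
    rw [hjj]
  · have hj2 : n ≤ j := by omega
    rw [suff_of_ge _ hj2, suff_of_ge _ hj2]
    simp

noncomputable def TEquiv (hFH : F ≤ H) [H.Normal] (hn : 1 ≤ n) (g : Fin n → G) :
    (F × (Fin (n - 1) → H)) ≃ {x // x ∈ Tset F H g} where
  toFun p := ⟨Phi F H hn g p, Phi_mem F H hFH hn g p⟩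
  invFun x :=
    (⟨listProd x.1 * (listProd g)⁻¹, (Finset.mem_filter.mp x.2).2.1⟩,
     fun i => ⟨Psih g x.1 i,
       suff_mul_inv_mem H (Finset.mem_filter.mp x.2).2.2 _ (by have := i.isLt; omega)⟩)
  left_inv p := by
    refine Prod.ext ?_ ?_
    · refine Subtype.ext ?_
      show listProd (Phi F H hn g p) * (listProd g)⁻¹ = (p.1 : G)
      rw [listProd_Phi, mul_assoc, mul_inv_cancel, mul_one]
    · refine funext fun i => Subtype.ext ?_
      show Psih g (Phi F H hn g p) i = (p.2 i : G)
      have hi := i.isLt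
      rw [Psih, Phi, suff_kilian H hn _ _ (by omega),
        suff_update_zero hn g _ (i.val + 1) (by omega) (by omega), dfun_succ]
      group
  right_inv x := by
    obtain ⟨g', hg'⟩ := x
    obtain ⟨-, hF, hH⟩ := Finset.mem_filter.mp hg'
    refine Subtype.ext (funext fun i => ?_)
    show kilian H _ _ i = g' i
    rw [kilian_eq]
    have hd : ∀ j, 1 ≤ j → dfun H n
        (fun i => (⟨Psih g g' i,
          suff_mul_inv_mem H (Finset.mem_filter.mp hg').2.2 _
            (by have := i.isLt; omega)⟩ : H)) j
        = suff g j * (suff g' j)⁻¹ :=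
      fun j hj => dfun_psih' H _ (fun _ => rfl) j hj
    have hi := i.isLt
    rcases Nat.eq_zero_or_pos i.val with h0 | h0
    · have hieq : i = ⟨0, hn⟩ := by simp [Fin.ext_iff, h0]
      subst hieq
      rw [Function.update_self, dfun_zero, inv_one, one_mul, hd 1 le_rfl]
      show listProd g' * (listProd g)⁻¹ * g ⟨0, hn⟩ * (suff g 1 * (suff g' 1)⁻¹) = g' ⟨0, hn⟩
      rw [listProd_eq_suff g, listProd_eq_suff g', suff_succ g hn, suff_succ g' hn]
      group
    · rw [Function.update_of_ne (by simp [Fin.ext_iff]; omega), hd i.val h0,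
        hd (i.val + 1) (by omega), suff_succ g hi, suff_succ g' hi]
      have : (⟨i.val, hi⟩ : Fin n) = i := by simp [Fin.ext_iff]
      rw [this]
      group

lemma Tset_card (hFH : F ≤ H) [H.Normal] (hn : 1 ≤ n) (g : Fin n → G) :
    (Tset F H g).card = Fintype.card F * Fintype.card (Fin (n - 1) → H) := by
  classical
  rw [← Fintype.card_coe (Tset F H g), ← Fintype.card_congr (TEquiv F H hFH hn g),
    Fintype.card_prod]

end Bij2

/-- Random self-reduction: `B(g)` is exactly `D(g)` translated by the group element
`Πg = g 0 * ⋯ * g (n−1)`. -/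
theorem stmt_5 {n : ℕ} (hn : 1 ≤ n) (F H : Subgroup G) (hFH : F ≤ H) [H.Normal]
    (A : (Fin n → G) → PMF S) (g : Fin n → G) :
    Bpmf F H hn A g = PMF.map (fun s => listProd g • s) (Dpmf F H A g) := by
  classical
  letI : Nonempty F := ⟨1⟩
  letI : Nonempty H := ⟨1⟩
  have hc : (((Tset F H g).card : ℝ≥0∞))⁻¹
      = ((Fintype.card F : ℝ≥0∞))⁻¹ * ((Fintype.card (Fin (n - 1) → H) : ℝ≥0∞))⁻¹ := by
    rw [Tset_card F H hFH hn g, Nat.cast_mul,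
      ENNReal.mul_inv (Or.inr (ENNReal.natCast_ne_top _)) (Or.inl (ENNReal.natCast_ne_top _))]
  ext s
  have key : ∀ p : F × (Fin (n - 1) → H),
      ((A (Phi F H hn g p)).map (fun t => ((p.1 : G))⁻¹ • t)) s
        = ((A (Phi F H hn g p)).map
            ((fun t => listProd g • t) ∘ fun t => (listProd (Phi F H hn g p))⁻¹ • t)) s := by
    intro p
    have hf : (fun t : S => ((p.1 : G))⁻¹ • t)
        = ((fun t => listProd g • t) ∘ fun t => (listProd (Phi F H hn g p))⁻¹ • t) := by
      funext t
      simp [Function.comp, listProd_Phi, mul_inv_rev, smul_smul, mul_assoc]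
    rw [hf]
  calc (Bpmf F H hn A g) s
      = ∑ p : F × (Fin (n - 1) → H),
          (((Tset F H g).card : ℝ≥0∞))⁻¹ *
            ((A (Phi F H hn g p)).map
              ((fun t => listProd g • t) ∘
                fun t => (listProd (Phi F H hn g p))⁻¹ • t)) s := by
        simp only [Bpmf, PMF.bind_apply, PMF.uniformOfFintype_apply, tsum_fintype]
        rw [Fintype.sum_prod_type]
        refine Finset.sum_congr rfl fun f _ => ?_
        rw [Finset.mul_sum]
        refine Finset.sum_congr rfl fun h _ => ?_
        rw [← mul_assoc, ← hc, ← key (f, h)]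
        rfl
    _ = ∑ x : {x // x ∈ Tset F H g},
          (((Tset F H g).card : ℝ≥0∞))⁻¹ *
            ((A (x : Fin n → G)).map
              ((fun t => listProd g • t) ∘
                fun t => (listProd (x : Fin n → G))⁻¹ • t)) s := by
        exact Fintype.sum_equiv (TEquiv F H hFH hn g) _ _ (fun p => rfl)
    _ = (PMF.map (fun s => listProd g • s) (Dpmf F H A g)) s := by
        rw [Dpmf, PMF.map_bind, PMF.bind_apply, tsum_fintype]
        simp only [PMF.map_comp, PMF.uniformOfFinset_apply, ite_mul, zero_mul]
        rw [Finset.sum_ite_mem, Finset.univ_inter]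
        exact Finset.sum_coe_sort (Tset F H g)
          (fun i => (((Tset F H g).card : ℝ≥0∞))⁻¹ *
            ((A i).map ((fun t => listProd g • t) ∘ fun t => (listProd i)⁻¹ • t)) s)


end Stmt5
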